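/- In 𝒮, the product of the ideal (xz, xz²) with itself equals xz² · (x, xz, xz²), i.e. (xz, xz²)·(xz, xz²) = (x²z², x²z³, x²z⁴) = xz²·(x, xz, xz²) as ideals of 𝒮. Consequently the rule α ⊗ β ↦ (1/xz²)·αβ defines a surjective 𝒮-module homomorphism (xz, xz²) ⊗_𝒮 (xz, xz²) → (x, xz, xz²). -/

import Mathlib

set_option maxHeartbeats 1000000
set_option synthInstance.maxHeartbeats 400000

open MvPolynomial TensorProduct

/-- The ring `𝒮`: the `F`-subalgebra of `F[x,y,z]` generated by the six monomials
`x, xz, xz², y, yz, yz²` (the variables `x, y, z` are indexed by `0, 1, 2`). -/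
noncomputable def toricS (F : Type*) [CommRing F] : Subalgebra F (MvPolynomial (Fin 3) F) :=
  Algebra.adjoin F {X 0, X 0 * X 2, X 0 * X 2 ^ 2, X 1, X 1 * X 2, X 1 * X 2 ^ 2}

section elements

variable (F : Type*) [CommRing F]

/-- `x` as an element of `𝒮`. -/
noncomputable def sx : toricS F := ⟨X 0, Algebra.subset_adjoin (Or.inl rfl)⟩

/-- `xz` as an element of `𝒮`. -/
noncomputable def sxz : toricS F := ⟨X 0 * X 2, Algebra.subset_adjoin (Or.inr (Or.inl rfl))⟩

/-- `xz²` as an element of `𝒮`. -/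
noncomputable def sxz2 : toricS F :=
  ⟨X 0 * X 2 ^ 2, Algebra.subset_adjoin (Or.inr (Or.inr (Or.inl rfl)))⟩

/-- The ideal `J = (xz, xz²)` of `𝒮`, realizing the divisor class `𝒪(D₀)`. -/
noncomputable def Jideal : Ideal (toricS F) := Ideal.span {sxz F, sxz2 F}

/-- The ideal `W = (x, xz, xz²)` of `𝒮`, realizing the dualizing module `ω_𝒮 ≅ 𝒪(2D₀)`. -/
noncomputable def Wideal : Ideal (toricS F) := Ideal.span {sx F, sxz F, sxz2 F}

end elements

/-! Since `(xz)² = xz² · x`, the square of `J = (xz, xz²)` is `xz² · (x, xz, xz²) = xz² · W`.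
As `xz²` is a non-zero-divisor, multiplication by it is an isomorphism `W ≅ xz² · W = J · J`;
composing the surjective multiplication map `J ⊗ J ↠ J · J` with its inverse gives `f`. -/

namespace Ideal

variable {R : Type*} [CommRing R]

theorem span_pair_mul_span_pair_self (a b : R) :
    (span {a, b} : Ideal R) * span {a, b} = span {a * a, a * b, b * b} := by
  rw [span_pair_mul_span_pair, mul_comm b a, Set.insert_idem]

theorem span_singleton_mul_span_triple (c x y z : R) :
    (span {c} : Ideal R) * span {x, y, z} = span {c * x, c * y, c * z} := by
  rw [span_mul_span', Set.singleton_mul, Set.image_insert_eq, Set.image_insert_eq,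
    Set.image_singleton]

theorem span_pair_mul_span_pair_self_of_mul_self_eq {a b x : R} (h : a * a = b * x) :
    (span {a, b} : Ideal R) * span {a, b} = span {b} * span {x, a, b} := by
  rw [span_pair_mul_span_pair_self, span_singleton_mul_span_triple, h, mul_comm a b]

noncomputable def mulLeftEquiv {c : R} (hc : IsLeftRegular c) (K : Ideal R) :
    K ≃ₗ[R] ↥(span {c} * K) :=
  (LinearEquiv.ofInjective (LinearMap.mulLeft R c ∘ₗ K.subtype)
      fun _ _ h => Subtype.ext (hc h)).trans
    (LinearEquiv.ofEq _ _ <| by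
      ext x
      simp [mem_span_singleton_mul])

theorem mulLeftEquiv_apply {c : R} (hc : IsLeftRegular c) (K : Ideal R) (k : K) :
    (mulLeftEquiv hc K k : R) = c * k := rfl

theorem exists_surjective_tensorProduct_of_mul_eq {I J K : Ideal R} {c : R}
    (hc : IsLeftRegular c) (h : I * J = span {c} * K) :
    ∃ f : I ⊗[R] J →ₗ[R] K, Function.Surjective f ∧
      ∀ a b, (f (a ⊗ₜ b) : R) * c = a * b := by
  let f := (mulLeftEquiv hc K).symm.toLinearMap ∘ₗ (LinearEquiv.ofEq _ _ h).toLinearMap ∘ₗ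
    Submodule.mulMap' I J
  refine ⟨f, ?_, fun a b => ?_⟩
  · simpa [f] using Submodule.mulMap'_surjective I J
  · rw [mul_comm, ← mulLeftEquiv_apply hc]
    simp [f]

end Ideal

section toricS

variable (F : Type*) [Field F]

theorem sxz_mul_sxz : sxz F * sxz F = sxz2 F * sx F :=
  Subtype.ext <|
    show (X 0 * X 2 : MvPolynomial (Fin 3) F) * (X 0 * X 2) = X 0 * X 2 ^ 2 * X 0 by ring

theorem sxz2_ne_zero : sxz2 F ≠ 0 := fun h =>
  mul_ne_zero (X_ne_zero 0) (pow_ne_zero 2 (X_ne_zero 2)) (congrArg Subtype.val h)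

theorem Jideal_mul_Jideal : Jideal F * Jideal F = Ideal.span {sxz2 F} * Wideal F :=
  Ideal.span_pair_mul_span_pair_self_of_mul_self_eq (sxz_mul_sxz F)

end toricS

theorem toricS_square_of_divisor_ideal_general
    (F : Type*) [Field F] :
    (Jideal F * Jideal F
        = Ideal.span {sxz F * sxz F, sxz F * sxz2 F, sxz2 F * sxz2 F}) ∧
    (Jideal F * Jideal F = Ideal.span {sxz2 F} * Wideal F) ∧
    ∃ f : ((Jideal F) ⊗[toricS F] (Jideal F)) →ₗ[toricS F] (Wideal F),
      Function.Surjective f ∧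
      ∀ a b : Jideal F,
        ((f (a ⊗ₜ[toricS F] b) : Wideal F) : toricS F) * sxz2 F
          = (a : toricS F) * (b : toricS F) :=
  ⟨Ideal.span_pair_mul_span_pair_self _ _, Jideal_mul_Jideal F,
    Ideal.exists_surjective_tensorProduct_of_mul_eq
      (IsRegular.of_ne_zero (sxz2_ne_zero F)).left (Jideal_mul_Jideal F)⟩

/-- In `𝒮` one has `(xz, xz²)·(xz, xz²) = (x²z², x²z³, x²z⁴) = xz²·(x, xz, xz²)` as ideals;
consequently the rule `α ⊗ β ↦ (1/xz²)·αβ` defines a surjective `𝒮`-module homomorphism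
`(xz, xz²) ⊗_𝒮 (xz, xz²) → (x, xz, xz²)`, i.e. there is a surjective `𝒮`-linear map
`f : J ⊗ J → W` with `xz² · f(α ⊗ β) = α·β` for all `α, β ∈ J`. -/
theorem toricS_square_of_divisor_ideal (ℓ : ℕ) (hℓ : ℓ.Prime) (hℓ2 : 2 < ℓ)
    (F : Type*) [Field F] [Fintype F] [CharP F ℓ] :
    (Jideal F * Jideal F
        = Ideal.span {sxz F * sxz F, sxz F * sxz2 F, sxz2 F * sxz2 F}) ∧
    (Jideal F * Jideal F = Ideal.span {sxz2 F} * Wideal F) ∧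
    ∃ f : ((Jideal F) ⊗[toricS F] (Jideal F)) →ₗ[toricS F] (Wideal F),
      Function.Surjective f ∧
      ∀ a b : Jideal F,
        ((f (a ⊗ₜ[toricS F] b) : Wideal F) : toricS F) * sxz2 F
          = (a : toricS F) * (b : toricS F) :=
  toricS_square_of_divisor_ideal_general F
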